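/- For every integer n ≥ 2, B(n) = Σ_{r=0}^{n−2} v(r). -/
import Mathlib


/-- The integer sequence `v`: `v(0)=1`, `v(1)=14`, `v(2)=224`, and for `m ≥ 2`,
`v(m+1) = 16·v(m) − v(m−1)`. -/
def vseq : ℕ → ℤ
  | 0 => 1
  | 1 => 14
  | 2 => 224
  | (m + 3) => 16 * vseq (m + 2) - vseq (m + 1)

/-- The pair `(A(n), B(n))` of integer sequences: `A(1)=1`, `B(1)=0`, `A(2)=16`,
`B(2)=1`, and for `n ≥ 3`, `A(n) = 16·(A(n−1) + B(n−1))` and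
`B(n) = 16^(n−2) − A(n−2) − B(n−2)`.  (The value at `0` is junk.) -/
def ABseq : ℕ → ℤ × ℤ
  | 0 => (0, 0)
  | 1 => (1, 0)
  | 2 => (16, 1)
  | (m + 3) =>
      (16 * ((ABseq (m + 2)).1 + (ABseq (m + 2)).2),
       16 ^ (m + 1) - (ABseq (m + 1)).1 - (ABseq (m + 1)).2)

/-- The sequence `A`. -/
def Aseq (n : ℕ) : ℤ := (ABseq n).1

/-- The sequence `B`. -/
def Bseq (n : ℕ) : ℤ := (ABseq n).2

lemma vrec (m : ℕ) :
    vseq (m + 2) = 14 * (∑ r ∈ Finset.range (m + 1), vseq r) + 15 * vseq (m + 1) := by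
  induction m with
  | zero => simp [vseq]
  | succ k ih =>
      rw [Finset.sum_range_succ]
      have h : vseq (k + 3) = 16 * vseq (k + 2) - vseq (k + 1) := rfl
      rw [h]
      linarith [ih]

lemma Csum : ∀ n : ℕ,
    (ABseq (n + 1)).1 + (ABseq (n + 1)).2 =
      16 ^ (n + 1) - ∑ r ∈ Finset.range (n + 2), vseq r
  | 0 => by simp [ABseq, Finset.sum_range_succ, vseq]
  | 1 => by
      norm_num [ABseq, Finset.sum_range_succ, vseq]
  | (n + 2) => by
      have ih1 := Csum n
      have ih2 := Csum (n + 1)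
      have h1 : (ABseq (n + 3)).1 = 16 * ((ABseq (n + 2)).1 + (ABseq (n + 2)).2) := rfl
      have h2 : (ABseq (n + 3)).2 = 16 ^ (n + 1) - (ABseq (n + 1)).1 - (ABseq (n + 1)).2 := rfl
      have hv := vrec (n + 1)
      rw [h1, h2]
      simp only [show n + 1 + 1 = n + 2 from rfl, show n + 1 + 2 = n + 3 from rfl,
        show n + 2 + 2 = n + 4 from rfl] at *
      rw [Finset.sum_range_succ (n := n + 3)] at *
      rw [Finset.sum_range_succ (n := n + 2)] at *
      have hp : (16 : ℤ) ^ (n + 2) = 16 * 16 ^ (n + 1) := by ring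
      have hq : (16 : ℤ) ^ (n + 3) = 16 * 16 ^ (n + 2) := by ring
      linarith

/-- For every integer `n ≥ 2`, `B(n) = Σ_{r=0}^{n−2} v(r)`. -/
theorem Bseq_eq_sum_vseq (n : ℕ) (hn : 2 ≤ n) :
    Bseq n = ∑ r ∈ Finset.range (n - 1), vseq r := by
  obtain ⟨m, rfl⟩ : ∃ m, n = m + 2 := ⟨n - 2, by omega⟩
  match m with
  | 0 => simp [Bseq, ABseq, Finset.sum_range_succ, vseq]
  | (k + 1) =>
      have h := Csum k
      have h2 : Bseq (k + 3) = 16 ^ (k + 1) - (ABseq (k + 1)).1 - (ABseq (k + 1)).2 := rfl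
      have h3 : k + 1 + 2 - 1 = k + 2 := by omega
      rw [h3, h2]
      linarith
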